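/- arXiv:0809.4212 — 5 statements merged into one kernel-verified Lean document; each statement's English description precedes it below -/
import Mathlib

section
/- Let A be an associative unital ring. For all b₁, b₂, b₃, b₄ ∈ A the fundamental (Jacobi-type) identity holds: [{b₂,b₃,b₄}, b₁] + [{b₁,b₃,b₄}, b₂] + [{b₁,b₂,b₄}, b₃] + [{b₁,b₂,b₃}, b₄] = 0. (This is the fundamental identity making L₃(A) an elementary Lie algebra of order three, and it is a consequence of associativity.) -/
/-- The symmetrized triple product `{a,b,c} = Σ_{σ∈S₃} a_{σ(1)} a_{σ(2)} a_{σ(3)}`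
in an associative unital ring. -/
def tripleSym {A : Type*} [Ring A] (a b c : A) : A :=
  a * b * c + a * c * b + b * a * c + b * c * a + c * a * b + c * b * a

/-- The commutator `[a,b] = ab - ba`. -/
def commBr {A : Type*} [Ring A] (a b : A) : A := a * b - b * a

/-- Fundamental identity of the elementary Lie algebra of order three `L₃(A)`
associated to an associative unital ring `A`. -/
theorem fundamental_identity_L3 {A : Type*} [Ring A] (b₁ b₂ b₃ b₄ : A) :
    commBr (tripleSym b₂ b₃ b₄) b₁ + commBr (tripleSym b₁ b₃ b₄) b₂ +
      commBr (tripleSym b₁ b₂ b₄) b₃ + commBr (tripleSym b₁ b₂ b₃) b₄ = 0 := by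
  simp only [tripleSym, commBr]; noncomm_ring
end

section
/- Let V be a ℂ-vector space of dimension at least 2 and let n ≥ 3. Then the n-exterior algebra Λ(V,n) = T(V)/I(V,n) is infinite-dimensional over ℂ. (In contrast with the usual exterior algebra n = 2, the relations of order n ≥ 3 do not allow one to reorder generators, and for instance the images of the elements (e₁e₂)^k, k ≥ 0, for two linearly independent vectors e₁, e₂ are all linearly independent.) -/
/-- Relation whose `RingQuot` is the `n`-exterior (Roby) algebra: every full
symmetrization `Σ_{σ∈S_n} v_{σ(1)} ⊗ ⋯ ⊗ v_{σ(n)}` is identified with `0`. -/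
def symRel (V : Type*) [AddCommGroup V] [Module ℂ V] (n : ℕ) :
    TensorAlgebra ℂ V → TensorAlgebra ℂ V → Prop :=
  fun a b => b = 0 ∧ ∃ v : Fin n → V,
    a = ∑ σ : Equiv.Perm (Fin n),
      (List.ofFn fun i => TensorAlgebra.ι ℂ (v (σ i))).prod

/-!
Every matrix `!![0, a, 0; c, 0, a; 0, -c, 0]` over a commutative ring has zero cube. Choose
linearly independent `e₀, e₁ ∈ V` and a linear retraction `π : V → ℂ²` of `p ↦ p₀ e₀ + p₁ e₁`;
then `φ v := !![0, a, 0; c, 0, a; 0, -c, 0]` with `a = π₀ v`, `c = π₁ v • X` sends every vector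
to a matrix over `ℂ[X]` whose `n`-th power vanishes. By polarization, the full symmetrization of
`n` elements of any ring is an alternating sum of `n`-th powers of their partial sums, so the
algebra map `T(V) → M₃(ℂ[X])` extending `φ` kills `I(V,n)` and descends to `Λ(V,n)`. It sends
`e₀e₁` to `diag(X, -X, 0)`, which is transcendental over `ℂ`; but in a finite-dimensional algebra
every element is algebraic.
-/

open Finset

theorem sum_pow_eq_sum_piFinset {R ι : Type*} [Semiring R] [DecidableEq ι] (s : Finset ι)
    (z : ι → R) (n : ℕ) :
    (∑ i ∈ s, z i) ^ n =
      ∑ r ∈ Fintype.piFinset fun _ : Fin n => s, (List.ofFn fun j => z (r j)).prod := by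
  simpa [List.ofFn_const, List.prod_replicate] using
    (MultilinearMap.mkPiAlgebraFin ℕ n R).map_sum_finset (fun _ => z) (fun _ => s)

/-- Inclusion–exclusion over the values missed by `r : Fin n → Fin n`: the maps missing no value
are the permutations, and those missing every value of `t` are the maps into `tᶜ`. -/
theorem sum_perm_prod_ofFn_eq_sum_neg_one_pow_smul_pow {R : Type*} [Ring R] {n : ℕ}
    (z : Fin n → R) :
    ∑ σ : Equiv.Perm (Fin n), (List.ofFn fun i => z (σ i)).prod
      = ∑ t : Finset (Fin n), (-1 : ℤ) ^ #t • (∑ i ∈ tᶜ, z i) ^ n := by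
  let missing (i : Fin n) : Finset (Fin n → Fin n) := {r | ∀ j, r j ≠ i}
  have h_surj : (univ.inf fun i => (missing i)ᶜ) =
      univ.map ⟨fun σ : Equiv.Perm (Fin n) => ⇑σ, DFunLike.coe_injective⟩ := by
    ext r
    simp only [missing, mem_inf, mem_univ, mem_compl, mem_filter, true_and, forall_const,
      not_forall, not_not, mem_map, Function.Embedding.coeFn_mk]
    exact ⟨fun h => ⟨.ofBijective r (Finite.surjective_iff_bijective.mp h), rfl⟩,
      fun ⟨σ, hσ⟩ => hσ ▸ σ.surjective⟩
  have h_into (t : Finset (Fin n)) : t.inf missing = Fintype.piFinset fun _ => tᶜ := by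
    ext r
    simp only [ne_eq, mem_inf, mem_filter, mem_univ, true_and, Fintype.mem_piFinset, mem_compl,
      missing]
    exact ⟨fun h j hj => h _ hj j rfl, fun h i hi j hj => h j (hj ▸ hi)⟩
  have := inclusion_exclusion_sum_inf_compl univ missing fun r => (List.ofFn fun i => z (r i)).prod
  rw [h_surj, sum_map, powerset_univ] at this
  simpa [h_into, sum_pow_eq_sum_piFinset] using this

theorem sum_perm_prod_ofFn_eq_zero_of_pow_eq_zero {R : Type*} [Ring R] {n : ℕ} (z : Fin n → R)
    (h : ∀ s : Finset (Fin n), (∑ i ∈ s, z i) ^ n = 0) :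
    ∑ σ : Equiv.Perm (Fin n), (List.ofFn fun i => z (σ i)).prod = 0 := by
  simp [sum_perm_prod_ofFn_eq_sum_neg_one_pow_smul_pow, h]

section CubeNilMatrix

variable {R : Type*} [CommRing R]

def cubeNilMatrix (a c : R) : Matrix (Fin 3) (Fin 3) R := !![0, a, 0; c, 0, a; 0, -c, 0]

theorem cubeNilMatrix_pow_three (a c : R) : cubeNilMatrix a c ^ 3 = 0 := by
  ext i j
  fin_cases i <;> fin_cases j <;>
    simp [cubeNilMatrix, pow_succ, Matrix.mul_apply, Fin.sum_univ_three] <;> ring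

theorem cubeNilMatrix_mul_cubeNilMatrix (a c : R) :
    cubeNilMatrix a 0 * cubeNilMatrix 0 c = Matrix.diagonal ![a * c, -(a * c), 0] := by
  ext i j
  fin_cases i <;> fin_cases j <;> simp [cubeNilMatrix, Matrix.mul_apply, Fin.sum_univ_three]

variable {K : Type*} [CommRing K] [Algebra K R]

def cubeNilMatrixLinearMap (s t : R) : (Fin 2 → K) →ₗ[K] Matrix (Fin 3) (Fin 3) R where
  toFun p := cubeNilMatrix (p 0 • s) (p 1 • t)
  map_add' p q := by
    ext i j
    fin_cases i <;> fin_cases j <;> simp [cubeNilMatrix, add_smul, add_comm]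
  map_smul' c p := by
    ext i j
    fin_cases i <;> fin_cases j <;> simp [cubeNilMatrix, mul_smul]

end CubeNilMatrix

section SymRelLift

variable {V A : Type*} [AddCommGroup V] [Module ℂ V] [Ring A] [Algebra ℂ A] {n : ℕ}

theorem tensorAlgebraLift_respects_symRel (φ : V →ₗ[ℂ] A) (hφ : ∀ w, φ w ^ n = 0)
    ⦃a b : TensorAlgebra ℂ V⦄ (h : symRel V n a b) :
    TensorAlgebra.lift ℂ φ a = TensorAlgebra.lift ℂ φ b := by
  obtain ⟨rfl, v, rfl⟩ := h
  simp only [map_zero, map_sum, map_list_prod, List.map_ofFn, Function.comp_def,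
    TensorAlgebra.lift_ι_apply]
  exact sum_perm_prod_ofFn_eq_zero_of_pow_eq_zero _ fun s => by rw [← map_sum φ v s, hφ]

noncomputable def symRelLift (φ : V →ₗ[ℂ] A) (hφ : ∀ w, φ w ^ n = 0) :
    RingQuot (symRel V n) →ₐ[ℂ] A :=
  RingQuot.liftAlgHom ℂ ⟨TensorAlgebra.lift ℂ φ, tensorAlgebraLift_respects_symRel φ hφ⟩

theorem symRelLift_mkAlgHom_ι (φ : V →ₗ[ℂ] A) (hφ : ∀ w, φ w ^ n = 0) (v : V) :
    symRelLift φ hφ (RingQuot.mkAlgHom ℂ (symRel V n) (TensorAlgebra.ι ℂ v)) = φ v := by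
  simp [symRelLift]

end SymRelLift

open Polynomial in
/-- If `dim V ≥ 2` and `n ≥ 3`, the `n`-exterior algebra
`Λ(V,n) = T(V)/I(V,n)` is infinite-dimensional over `ℂ`. -/
theorem roby_algebra_infinite_dimensional
    (V : Type*) [AddCommGroup V] [Module ℂ V]
    (hV : 2 ≤ Module.rank ℂ V) (n : ℕ) (hn : 3 ≤ n) :
    ¬ Module.Finite ℂ (RingQuot (symRel V n)) := by
  obtain ⟨e, he⟩ := exists_linearIndependent_of_le_rank (R := ℂ) (n := 2) (by exact_mod_cast hV)
  obtain ⟨π, hπ⟩ := (Fintype.linearCombination ℂ e).exists_leftInverse_of_injective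
    (LinearMap.ker_eq_bot.mpr he.fintypeLinearCombination_injective)
  have hπe (i : Fin 2) : π (e i) = Pi.single i 1 := by
    simpa using LinearMap.congr_fun hπ (Pi.single i 1)
  let φ := cubeNilMatrixLinearMap (1 : ℂ[X]) X ∘ₗ π
  have hφ (w : V) : φ w ^ n = 0 := pow_eq_zero_of_le hn (cubeNilMatrix_pow_three _ _)
  let t := RingQuot.mkAlgHom ℂ (symRel V n) (TensorAlgebra.ι ℂ (e 0) * TensorAlgebra.ι ℂ (e 1))
  have ht : symRelLift φ hφ t = Matrix.diagonalAlgHom ℂ ![X, -X, 0] := by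
    simp [t, symRelLift_mkAlgHom_ι, φ, hπe, cubeNilMatrixLinearMap,
      cubeNilMatrix_mul_cubeNilMatrix]
  intro hfin
  have h_alg := (IsAlgebraic.of_finite ℂ t).algHom (symRelLift φ hφ)
  rw [ht, isAlgebraic_algHom_iff _ Matrix.diagonal_injective] at h_alg
  exact transcendental_X ℂ (h_alg.algHom (Pi.evalAlgHom ℂ _ 0))
end

section
/- For every integer k ≥ 3, the number of sequences (i₁,…,i_k) ∈ {1,2}^k having no rise of length 3 (i.e. no index ℓ with i_{ℓ+1} ≤ i_{ℓ+2} ≤ i_{ℓ+3}) equals 4 if k is odd and 5 if k is even. (These count the Roby basis elements t(e₂e₁)^m t′ of the graded components Λ_k(V,3) of the three-exterior algebra on a 2-dimensional space.) -/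
/-- A sequence `f : Fin k → Fin 2` has a rise of length 3 if it has three
consecutive weakly increasing entries. -/
def HasRise3 {k : ℕ} (f : Fin k → Fin 2) : Prop :=
  ∃ ℓ : ℕ, ∃ h : ℓ + 2 < k,
    f ⟨ℓ, by omega⟩ ≤ f ⟨ℓ + 1, by omega⟩ ∧ f ⟨ℓ + 1, by omega⟩ ≤ f ⟨ℓ + 2, h⟩

namespace Rise3Aux

variable {k : ℕ}

/-- ℕ-valued version of `f`, extended by `0`. -/
def toF (f : Fin k → Fin 2) : ℕ → ℕ := fun j => if h : j < k then (f ⟨j, h⟩).val else 0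

lemma toF_eq (f : Fin k → Fin 2) {j : ℕ} (hj : j < k) : toF f j = (f ⟨j, hj⟩).val :=
  dif_pos hj

lemma toF_lt (f : Fin k → Fin 2) {j : ℕ} (hj : j < k) : toF f j < 2 := by
  rw [toF_eq f hj]; exact (f _).isLt

/-- No-rise condition for an ℕ-valued sequence. -/
def NR (k : ℕ) (g : ℕ → ℕ) : Prop :=
  ∀ ℓ, ℓ + 2 < k → ¬ (g ℓ ≤ g (ℓ + 1) ∧ g (ℓ + 1) ≤ g (ℓ + 2))

lemma hasRise_iff (f : Fin k → Fin 2) :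
    HasRise3 f ↔ ∃ ℓ, ℓ + 2 < k ∧ toF f ℓ ≤ toF f (ℓ + 1) ∧ toF f (ℓ + 1) ≤ toF f (ℓ + 2) := by
  constructor
  · rintro ⟨ℓ, h, h1, h2⟩
    have e0 := toF_eq f (show ℓ < k by omega)
    have e1 := toF_eq f (show ℓ + 1 < k by omega)
    have e2 := toF_eq f h
    have h1' := Fin.le_def.mp h1
    have h2' := Fin.le_def.mp h2
    exact ⟨ℓ, h, by omega, by omega⟩
  · rintro ⟨ℓ, h, h1, h2⟩
    have e0 := toF_eq f (show ℓ < k by omega)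
    have e1 := toF_eq f (show ℓ + 1 < k by omega)
    have e2 := toF_eq f h
    exact ⟨ℓ, h, Fin.le_def.mpr (by omega), Fin.le_def.mpr (by omega)⟩

lemma noRise_iff (f : Fin k → Fin 2) : ¬ HasRise3 f ↔ NR k (toF f) := by
  rw [hasRise_iff]
  constructor
  · intro h ℓ hℓ hc
    exact h ⟨ℓ, hℓ, hc⟩
  · rintro h ⟨ℓ, hℓ, hc1, hc2⟩
    exact h ℓ hℓ ⟨hc1, hc2⟩

lemma adj (g : ℕ → ℕ) (hb : ∀ j, j < k → g j < 2) (hr : NR k g)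
    (i : ℕ) (h1 : 1 ≤ i) (h2 : i + 3 ≤ k) : g i + g (i + 1) = 1 := by
  have b0 := hb (i - 1) (by omega)
  have b1 := hb i (by omega)
  have b2 := hb (i + 1) (by omega)
  have b3 := hb (i + 2) (by omega)
  have r1 := hr i (by omega)
  have r2 := hr (i - 1) (by omega)
  rw [show i - 1 + 1 = i by omega, show i - 1 + 2 = i + 1 by omega] at r2
  omega

lemma interior (g : ℕ → ℕ) (hb : ∀ j, j < k → g j < 2) (hr : NR k g) :
    ∀ i, 1 ≤ i → i + 2 ≤ k → g i = if i % 2 = 1 then g 1 else 1 - g 1 := by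
  intro i
  induction i with
  | zero => intro h1 _; exact absurd h1 (by omega)
  | succ n ih =>
    intro h1 h2
    rcases Nat.eq_zero_or_pos n with hn | hn
    · subst hn; simp
    · have hi := ih (by omega) (by omega)
      have ha := adj g hb hr n (by omega) (by omega)
      have hb1 := hb 1 (by omega)
      split_ifs at hi ⊢ <;> omega

lemma classify (hk : 3 ≤ k) (g : ℕ → ℕ) (hb : ∀ j, j < k → g j < 2) (hr : NR k g) :
    (g 0 = 1 ∨ g 1 = 1) ∧ (k % 2 = 1 → (g 1 = 0 ∨ g (k - 1) = 0)) ∧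
      (k % 2 = 0 → (g 1 = 1 ∨ g (k - 1) = 0)) := by
  have b0 := hb 0 (by omega)
  have b1 := hb 1 (by omega)
  have b2 := hb 2 (by omega)
  have b3 := hb (k - 3) (by omega)
  have b4 := hb (k - 2) (by omega)
  have bl := hb (k - 1) (by omega)
  have r0' := hr 0 (by omega)
  have r0 : ¬ (g 0 ≤ g 1 ∧ g 1 ≤ g 2) := by simpa using r0'
  have rl := hr (k - 3) (by omega)
  rw [show k - 3 + 1 = k - 2 by omega, show k - 3 + 2 = k - 1 by omega] at rl
  have hint := interior g hb hr (k - 2) (by omega) (by omega)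
  split_ifs at hint <;> omega

/-- The explicit pattern sequence. -/
def pat (k a b c : ℕ) : ℕ → ℕ := fun j =>
  if j = 0 then a else if j = k - 1 then c else if j % 2 = 1 then b else 1 - b

lemma pat_noRise (hk : 3 ≤ k) (a b c : ℕ) (hb : b < 2)
    (h1 : a = 1 ∨ b = 1) (h2 : k % 2 = 1 → (b = 0 ∨ c = 0))
    (h3 : k % 2 = 0 → (b = 1 ∨ c = 0)) :
    NR k (pat k a b c) := by
  intro ℓ hℓ
  unfold pat
  split_ifs <;> first | contradiction | omega

lemma pat_eq (hk : 3 ≤ k) (g : ℕ → ℕ) (hb : ∀ j, j < k → g j < 2) (hr : NR k g) :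
    ∀ j, j < k → pat k (g 0) (g 1) (g (k - 1)) j = g j := by
  intro j hj
  unfold pat
  by_cases h0 : j = 0
  · rw [if_pos h0, h0]
  by_cases hl : j = k - 1
  · rw [if_neg h0, if_pos hl, hl]
  have hint := interior g hb hr j (by omega) (by omega)
  rw [if_neg h0, if_neg hl]
  exact hint.symm

/-- The explicit pattern as a `Fin` sequence. -/
def gfun (k : ℕ) (a b c : Fin 2) : Fin k → Fin 2 := fun i =>
  if i.val = 0 then a else if i.val = k - 1 then c
  else if i.val % 2 = 1 then b else 1 - b

lemma sub_one_val (b : Fin 2) : ((1 : Fin 2) - b).val = 1 - b.val := by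
  revert b; decide

lemma gfun_val (a b c : Fin 2) (i : Fin k) :
    (gfun k a b c i).val = pat k a.val b.val c.val i.val := by
  unfold gfun pat
  split_ifs <;> simp [sub_one_val]

lemma toF_gfun (a b c : Fin 2) {j : ℕ} (hj : j < k) :
    toF (gfun k a b c) j = pat k a.val b.val c.val j := by
  rw [toF_eq _ hj, gfun_val]

/-- The boundary predicate. -/
def Pk (k : ℕ) (x : Fin 2 × Fin 2 × Fin 2) : Prop :=
  (x.1.val = 1 ∨ x.2.1.val = 1) ∧ (k % 2 = 1 → (x.2.1.val = 0 ∨ x.2.2.val = 0)) ∧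
    (k % 2 = 0 → (x.2.1.val = 1 ∨ x.2.2.val = 0))

instance : DecidablePred (Pk k) := fun x => by unfold Pk; infer_instance

/-- The key equivalence. -/
noncomputable def equivAux (hk : 3 ≤ k) :
    {f : Fin k → Fin 2 // ¬ HasRise3 f} ≃ {x : Fin 2 × Fin 2 × Fin 2 // Pk k x} where
  toFun := fun ⟨f, hf⟩ =>
    ⟨(f ⟨0, by omega⟩, f ⟨1, by omega⟩, f ⟨k - 1, by omega⟩), by
      have hr : NR k (toF f) := (noRise_iff f).mp hf
      have hc := classify hk (toF f) (fun j hj => toF_lt f hj) hr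
      have e0 := toF_eq f (show (0:ℕ) < k by omega)
      have e1 := toF_eq f (show (1:ℕ) < k by omega)
      have e2 := toF_eq f (show k - 1 < k by omega)
      unfold Pk
      dsimp only
      omega⟩
  invFun := fun ⟨x, hx⟩ =>
    ⟨gfun k x.1 x.2.1 x.2.2, by
      rw [noRise_iff]
      intro ℓ hℓ
      have t0 := toF_gfun x.1 x.2.1 x.2.2 (show ℓ < k by omega)
      have t1 := toF_gfun x.1 x.2.1 x.2.2 (show ℓ + 1 < k by omega)
      have t2 := toF_gfun x.1 x.2.1 x.2.2 hℓ
      have np := pat_noRise hk x.1.val x.2.1.val x.2.2.val x.2.1.isLt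
        hx.1 hx.2.1 hx.2.2 ℓ hℓ
      omega⟩
  left_inv := by
    rintro ⟨f, hf⟩
    apply Subtype.ext
    funext i
    apply Fin.ext
    have hr : NR k (toF f) := (noRise_iff f).mp hf
    rw [gfun_val]
    rw [← toF_eq f (show (0:ℕ) < k by omega), ← toF_eq f (show (1:ℕ) < k by omega),
      ← toF_eq f (show k - 1 < k by omega)]
    rw [pat_eq hk (toF f) (fun j hj => toF_lt f hj) hr i.val i.isLt]
    exact toF_eq f i.isLt
  right_inv := by
    rintro ⟨⟨a, b, c⟩, hx⟩
    apply Subtype.ext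
    refine Prod.ext ?_ (Prod.ext ?_ ?_) <;> apply Fin.ext <;> rw [gfun_val]
    · show pat k a.val b.val c.val 0 = a.val
      simp [pat]
    · show pat k a.val b.val c.val 1 = b.val
      simp [pat, show (1:ℕ) ≠ k - 1 by omega]
    · show pat k a.val b.val c.val (k - 1) = c.val
      simp [pat, show k - 1 ≠ 0 by omega]

end Rise3Aux

/-- For `k ≥ 3`, the number of sequences in `{1,2}^k` with no rise of length 3
is `4` if `k` is odd and `5` if `k` is even. -/
theorem card_no_rise3_two_letters (k : ℕ) (hk : 3 ≤ k) :
    Nat.card {f : Fin k → Fin 2 // ¬ HasRise3 f} = if Odd k then 4 else 5 := by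
  rw [Nat.card_congr (Rise3Aux.equivAux hk)]
  rcases Nat.even_or_odd k with he | ho
  · have h2 : k % 2 = 0 := Nat.even_iff.mp he
    rw [if_neg (by simp [Nat.odd_iff, h2])]
    rw [Nat.card_congr (Equiv.subtypeEquivRight
      (q := fun x : Fin 2 × Fin 2 × Fin 2 =>
        (x.1.val = 1 ∨ x.2.1.val = 1) ∧ (x.2.1.val = 1 ∨ x.2.2.val = 0))
      (fun x => by unfold Rise3Aux.Pk; omega))]
    rw [Nat.card_eq_fintype_card]
    decide
  · have h2 : k % 2 = 1 := Nat.odd_iff.mp ho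
    rw [if_pos ho]
    rw [Nat.card_congr (Equiv.subtypeEquivRight
      (q := fun x : Fin 2 × Fin 2 × Fin 2 =>
        (x.1.val = 1 ∨ x.2.1.val = 1) ∧ (x.2.1.val = 0 ∨ x.2.2.val = 0))
      (fun x => by unfold Rise3Aux.Pk; omega))]
    rw [Nat.card_eq_fintype_card]
    decide
end

section
/- Let A be a ℤ₃-graded associative unital ℂ-algebra, let q ∈ ℂ be a primitive cube root of unity (q³ = 1, q ≠ 1), and let • be the twisted product on A ⊗_ℂ A determined by (a⊗c) • (b⊗d) = q^{|b||c|} (ab) ⊗ (cd) for homogeneous b, c. For y ∈ A write Δ̄(y) := y⊗1 + 1⊗y. Then for all y₁, y₂, y₃ of degree 1 in A: Σ_{σ∈S₃} Δ̄(y_{σ(1)}) • Δ̄(y_{σ(2)}) • Δ̄(y_{σ(3)}) = {y₁,y₂,y₃} ⊗ 1 + 1 ⊗ {y₁,y₂,y₃}, where {y₁,y₂,y₃} := Σ_{σ∈S₃} y_{σ(1)} y_{σ(2)} y_{σ(3)} is computed in A. (This is the compatibility of the coproduct with the ternary bracket: the symmetrized product of primitive elements is primitive.) -/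
open TensorProduct

/-! For degree-one `a, b, c`, expanding `Δ̄(a) • Δ̄(b) • Δ̄(c)` gives `abc ⊗ 1 + 1 ⊗ abc` plus six
mixed tensors carrying the twist factors `1, q, q²`. Under symmetrization each mixed tensor
`y_i y_j ⊗ y_k` (and `y_k ⊗ y_i y_j`) arises from three permutations, once with each factor, so
the mixed part is multiplied by `1 + q + q² = 0`. -/

/-- The defining property of the twisted multiplication on `A ⊗ A`:
`(a⊗c) • (b⊗d) = q^{|b||c|} (ab) ⊗ (cd)` for homogeneous `b, c`. -/
def IsTwistedMul {A : Type*} [Ring A] [Algebra ℂ A]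
    (𝒜 : ZMod 3 → Submodule ℂ A) (q : ℂ)
    (m : (A ⊗[ℂ] A) →ₗ[ℂ] (A ⊗[ℂ] A) →ₗ[ℂ] (A ⊗[ℂ] A)) : Prop :=
  ∀ (a b c d : A) (j k : ZMod 3), b ∈ 𝒜 j → c ∈ 𝒜 k →
    m (a ⊗ₜ[ℂ] c) (b ⊗ₜ[ℂ] d) = q ^ (j.val * k.val) • ((a * b) ⊗ₜ[ℂ] (c * d))

open Equiv Finset in
theorem Equiv.Perm.sum_fin_three {M : Type*} [AddCommMonoid M] (f : Fin 3 → Fin 3 → Fin 3 → M) :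
    ∑ σ : Perm (Fin 3), f (σ 0) (σ 1) (σ 2)
      = f 0 1 2 + f 0 2 1 + f 1 0 2 + f 1 2 0 + f 2 0 1 + f 2 1 0 := by
  have huniv : (univ : Finset (Perm (Fin 3))) =
      {1, swap 1 2, swap 0 1, swap 0 1 * swap 1 2, swap 1 2 * swap 0 1, swap 0 2} := by decide
  rw [huniv]
  repeat rw [sum_insert (by decide)]
  rw [sum_singleton]
  simp only [← add_assoc]
  rfl

theorem one_add_add_sq_eq_zero_of_pow_three {R : Type*} [CommRing R] [NoZeroDivisors R] {q : R}
    (hq3 : q ^ 3 = 1) (hq1 : q ≠ 1) : 1 + q + q ^ 2 = 0 := by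
  have h : (q - 1) * (1 + q + q ^ 2) = 0 := by linear_combination hq3
  exact (mul_eq_zero.mp h).resolve_left (sub_ne_zero.mpr hq1)

namespace IsTwistedMul

variable {A : Type*} [Ring A] [Algebra ℂ A] {𝒜 : ZMod 3 → Submodule ℂ A} [SetLike.GradedMonoid 𝒜]
  {q : ℂ} {m : (A ⊗[ℂ] A) →ₗ[ℂ] (A ⊗[ℂ] A) →ₗ[ℂ] (A ⊗[ℂ] A)}

theorem apply_tmul_primitive (hm : IsTwistedMul 𝒜 q m) (x : A) {y c : A} {k l : ZMod 3}
    (hc : c ∈ 𝒜 k) (hy : y ∈ 𝒜 l) :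
    m (x ⊗ₜ y) (c ⊗ₜ 1 + 1 ⊗ₜ c) = q ^ (k.val * l.val) • ((x * c) ⊗ₜ y) + x ⊗ₜ (y * c) := by
  rw [map_add, hm x c y 1 k l hc hy, hm x 1 y c 0 l SetLike.GradedOne.one_mem hy]
  simp

theorem apply_primitive_primitive (hm : IsTwistedMul 𝒜 q m) {a b : A} {i j : ZMod 3}
    (ha : a ∈ 𝒜 i) (hb : b ∈ 𝒜 j) :
    m (a ⊗ₜ 1 + 1 ⊗ₜ a) (b ⊗ₜ 1 + 1 ⊗ₜ b)
      = (a * b) ⊗ₜ 1 + a ⊗ₜ b + q ^ (j.val * i.val) • (b ⊗ₜ a) + 1 ⊗ₜ (a * b) := by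
  rw [LinearMap.map_add₂, hm.apply_tmul_primitive a hb SetLike.GradedOne.one_mem,
    hm.apply_tmul_primitive 1 hb ha]
  simp only [ZMod.val_zero, mul_zero, pow_zero, one_smul, one_mul]
  abel

theorem apply_primitive_triple (hm : IsTwistedMul 𝒜 q m) {a b c : A}
    (ha : a ∈ 𝒜 1) (hb : b ∈ 𝒜 1) (hc : c ∈ 𝒜 1) :
    m (m (a ⊗ₜ 1 + 1 ⊗ₜ a) (b ⊗ₜ 1 + 1 ⊗ₜ b)) (c ⊗ₜ 1 + 1 ⊗ₜ c)
      = (a * b * c) ⊗ₜ 1 + 1 ⊗ₜ (a * b * c) + (a * b) ⊗ₜ c + a ⊗ₜ (b * c)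
        + q • ((a * c) ⊗ₜ b) + q • (b ⊗ₜ (a * c))
        + q ^ 2 • ((b * c) ⊗ₜ a) + q ^ 2 • (c ⊗ₜ (a * b)) := by
  have hab : a * b ∈ 𝒜 2 := by simpa [one_add_one_eq_two] using SetLike.mul_mem_graded ha hb
  rw [hm.apply_primitive_primitive ha hb]
  simp only [LinearMap.map_add₂, LinearMap.map_smul₂,
    hm.apply_tmul_primitive (a * b) hc SetLike.GradedOne.one_mem, hm.apply_tmul_primitive a hc hb,
    hm.apply_tmul_primitive b hc ha, hm.apply_tmul_primitive 1 hc hab]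
  simp only [ZMod.val_zero, ZMod.val_one, show (2 : ZMod 3).val = 2 from rfl, one_mul, mul_one,
    mul_assoc]
  module

end IsTwistedMul

/-- Compatibility of the coproduct with the ternary bracket: for degree-one
elements `y₁, y₂, y₃` of a `ℤ₃`-graded algebra and `Δ̄(y) = y⊗1 + 1⊗y`,
the symmetrized twisted product of the `Δ̄(y_i)` equals
`{y₁,y₂,y₃} ⊗ 1 + 1 ⊗ {y₁,y₂,y₃}`. -/
theorem coproduct_symmetrized_product_primitive
    {A : Type*} [Ring A] [Algebra ℂ A]
    (𝒜 : ZMod 3 → Submodule ℂ A) [GradedAlgebra 𝒜]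
    (q : ℂ) (hq3 : q ^ 3 = 1) (hq1 : q ≠ 1)
    (m : (A ⊗[ℂ] A) →ₗ[ℂ] (A ⊗[ℂ] A) →ₗ[ℂ] (A ⊗[ℂ] A))
    (hm : IsTwistedMul 𝒜 q m)
    (y : Fin 3 → A) (hy : ∀ i, y i ∈ 𝒜 1)
    (Δ' : A → A ⊗[ℂ] A) (hΔ' : ∀ a : A, Δ' a = a ⊗ₜ[ℂ] 1 + 1 ⊗ₜ[ℂ] a)
    (T : A) (hT : T = ∑ σ : Equiv.Perm (Fin 3), y (σ 0) * y (σ 1) * y (σ 2)) :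
    ∑ σ : Equiv.Perm (Fin 3), m (m (Δ' (y (σ 0))) (Δ' (y (σ 1)))) (Δ' (y (σ 2)))
      = T ⊗ₜ[ℂ] 1 + 1 ⊗ₜ[ℂ] T := by
  have hq : q ^ 2 = -1 - q := by linear_combination one_add_add_sq_eq_zero_of_pow_three hq3 hq1
  rw [hT, Equiv.Perm.sum_fin_three (fun i j k => y i * y j * y k),
    Equiv.Perm.sum_fin_three (fun i j k => m (m (Δ' (y i)) (Δ' (y j))) (Δ' (y k)))]
  simp only [hΔ', hm.apply_primitive_triple (hy _) (hy _) (hy _), hq, add_tmul, tmul_add]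
  module
end

section
/- (Antipode.) Let g = g₀ ⊕ g₁ be an elementary Lie algebra of order three over ℂ, U(g) its universal enveloping algebra with canonical map ι, and q ∈ ℂ a primitive cube root of unity. Suppose 𝒜 : ℤ/3ℤ → Submodule ℂ U(g) is a grading making U(g) a ℤ₃-graded algebra such that ι(x,0) ∈ 𝒜₀ for all x ∈ g₀ and ι(0,y) ∈ 𝒜₁ for all y ∈ g₁. Then there exists a ℂ-linear map S : U(g) → U(g) satisfying S(1) = 1, S(ι z) = −ι z for every z ∈ g₀ ⊕ g₁, and the twisted anti-multiplicativity S(ab) = q^{|a||b|} S(b) S(a) for all homogeneous a, b ∈ U(g); moreover such a map S is unique. -/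
variable {g₀ g₁ : Type*} [LieRing g₀] [LieAlgebra ℂ g₀]
  [AddCommGroup g₁] [Module ℂ g₁] [LieRingModule g₀ g₁] [LieModule ℂ g₀ g₁]

/-- The relation on the tensor algebra `T(g₀ ⊕ g₁)` whose quotient is the
universal enveloping algebra of an elementary Lie algebra of order three
`g = g₀ ⊕ g₁` with ternary bracket `t`. -/
def envRel (t : g₁ →ₗ[ℂ] g₁ →ₗ[ℂ] g₁ →ₗ[ℂ] g₀) :
    TensorAlgebra ℂ (g₀ × g₁) → TensorAlgebra ℂ (g₀ × g₁) → Prop :=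
  fun a b =>
    (∃ x₁ x₂ : g₀,
      a = TensorAlgebra.ι ℂ ((x₁, 0) : g₀ × g₁) * TensorAlgebra.ι ℂ ((x₂, 0) : g₀ × g₁) ∧
      b = TensorAlgebra.ι ℂ ((x₂, 0) : g₀ × g₁) * TensorAlgebra.ι ℂ ((x₁, 0) : g₀ × g₁) +
        TensorAlgebra.ι ℂ ((⁅x₁, x₂⁆, 0) : g₀ × g₁)) ∨
    (∃ (x : g₀) (y : g₁),
      a = TensorAlgebra.ι ℂ ((x, 0) : g₀ × g₁) * TensorAlgebra.ι ℂ ((0, y) : g₀ × g₁) ∧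
      b = TensorAlgebra.ι ℂ ((0, y) : g₀ × g₁) * TensorAlgebra.ι ℂ ((x, 0) : g₀ × g₁) +
        TensorAlgebra.ι ℂ ((0, ⁅x, y⁆) : g₀ × g₁)) ∨
    (∃ y : Fin 3 → g₁,
      a = ∑ σ : Equiv.Perm (Fin 3),
        TensorAlgebra.ι ℂ ((0, y (σ 0)) : g₀ × g₁) *
        TensorAlgebra.ι ℂ ((0, y (σ 1)) : g₀ × g₁) *
        TensorAlgebra.ι ℂ ((0, y (σ 2)) : g₀ × g₁) ∧
      b = TensorAlgebra.ι ℂ ((t (y 0) (y 1) (y 2), 0) : g₀ × g₁))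

/-- The universal enveloping algebra `U(g)` of an elementary Lie algebra of
order three, as a quotient of the tensor algebra `T(g₀ ⊕ g₁)`. -/
def UEnv (t : g₁ →ₗ[ℂ] g₁ →ₗ[ℂ] g₁ →ₗ[ℂ] g₀) : Type _ := RingQuot (envRel t)

noncomputable instance (t : g₁ →ₗ[ℂ] g₁ →ₗ[ℂ] g₁ →ₗ[ℂ] g₀) : Ring (UEnv t) :=
  inferInstanceAs (Ring (RingQuot (envRel t)))

noncomputable instance (t : g₁ →ₗ[ℂ] g₁ →ₗ[ℂ] g₁ →ₗ[ℂ] g₀) : Algebra ℂ (UEnv t) :=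
  inferInstanceAs (Algebra ℂ (RingQuot (envRel t)))

/-- The canonical map `ι : g₀ ⊕ g₁ → U(g)`. -/
noncomputable def envι (t : g₁ →ₗ[ℂ] g₁ →ₗ[ℂ] g₁ →ₗ[ℂ] g₀) (z : g₀ × g₁) : UEnv t :=
  RingQuot.mkAlgHom ℂ (envRel t) (TensorAlgebra.ι ℂ z)

set_option linter.unusedSectionVars false

/-! Reversing products and negating generators respects the defining relations of `U(g)`, so
there is an ordinary antipode `S₀`: an anti-automorphism with `S₀ (ι z) = -ι z`. It preserves
the `ℤ₃`-grading because it does so on the homogeneous generators `ι (x, 0)`, `ι (0, y)`.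
Multiplying the degree-`j` part by `q ^ (j choose 2)` twists it as required, since
`(j + k choose 2) = (j choose 2) + (k choose 2) + j k` and `q ^ 3 = 1`; as
`(0 choose 2) = (1 choose 2) = 0`, the generators are still sent to their negatives.
Uniqueness: the twisted anti-multiplicativity determines `S` on products of homogeneous
generators, and these span `U(g)`. -/

namespace GradedAlgebra

open DirectSum

section

variable {ι R A : Type*} [DecidableEq ι] [AddCommMonoid ι] [CommSemiring R] [Semiring A]
  [Algebra R A] (𝒜 : ι → Submodule R A) [GradedAlgebra 𝒜]

theorem coe_decompose_mem_of_mem_iSup_inf {P : ι → Submodule R A} {a : A}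
    (ha : a ∈ ⨆ j, 𝒜 j ⊓ P j) (i : ι) : (decompose 𝒜 a i : A) ∈ P i := by
  induction ha using Submodule.iSup_induction' with
  | mem j x hx =>
    obtain ⟨hx𝒜, hxP⟩ := Submodule.mem_inf.mp hx
    by_cases hij : j = i
    · subst hij
      rwa [decompose_of_mem_same 𝒜 hx𝒜]
    · rw [decompose_of_mem_ne 𝒜 hx𝒜 hij]
      exact zero_mem _
  | zero => simp
  | add x y _ _ hx hy => simpa using add_mem hx hy

theorem grade_le_of_adjoin_eq_top {s : Set A} (hs : Algebra.adjoin R s = ⊤)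
    (P : ι → Submodule R A) (hone : (1 : A) ∈ P 0)
    (hmul : ∀ {i j : ι} {a b : A}, a ∈ 𝒜 i → a ∈ P i → b ∈ 𝒜 j → b ∈ P j → a * b ∈ P (i + j))
    (hgen : ∀ a ∈ s, ∃ i, a ∈ 𝒜 i ∧ a ∈ P i) (i : ι) : 𝒜 i ≤ P i := by
  set B := ⨆ j, 𝒜 j ⊓ P j
  have mem_B {j : ι} {a : A} (ha : a ∈ 𝒜 j) (ha' : a ∈ P j) : a ∈ B :=
    Submodule.mem_iSup_of_mem j (Submodule.mem_inf.mpr ⟨ha, ha'⟩)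
  have mul_mem_B (a b : A) (ha : a ∈ B) (hb : b ∈ B) : a * b ∈ B := by
    induction ha using Submodule.iSup_induction' with
    | mem j x hx =>
      induction hb using Submodule.iSup_induction' with
      | mem k y hy =>
        obtain ⟨hx𝒜, hxP⟩ := Submodule.mem_inf.mp hx
        obtain ⟨hy𝒜, hyP⟩ := Submodule.mem_inf.mp hy
        exact mem_B (SetLike.mul_mem_graded hx𝒜 hy𝒜) (hmul hx𝒜 hxP hy𝒜 hyP)
      | zero => simp
      | add y z _ _ hy hz => simpa [mul_add] using add_mem hy hz
    | zero => simp
    | add x y _ _ hx hy => simpa [add_mul] using add_mem hx hy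
  have hB : Algebra.adjoin R s ≤
      B.toSubalgebra (mem_B (SetLike.one_mem_graded 𝒜) hone) mul_mem_B :=
    Algebra.adjoin_le fun a ha => by
      obtain ⟨j, ha𝒜, haP⟩ := hgen a ha
      exact mem_B ha𝒜 haP
  intro a ha
  have haB : a ∈ B := hB (hs ▸ Algebra.mem_top)
  simpa [decompose_of_mem_same 𝒜 ha] using coe_decompose_mem_of_mem_iSup_inf 𝒜 haB i

theorem map_mem_of_antimultiplicative {s : Set A} (hs : Algebra.adjoin R s = ⊤)
    (f : A →ₗ[R] A) (hone : f 1 = 1) (hmul : ∀ a b, f (a * b) = f b * f a)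
    (hgen : ∀ a ∈ s, ∃ i, a ∈ 𝒜 i ∧ f a ∈ 𝒜 i) {i : ι} {a : A} (ha : a ∈ 𝒜 i) :
    f a ∈ 𝒜 i :=
  grade_le_of_adjoin_eq_top 𝒜 hs (fun i => (𝒜 i).comap f)
    (by simpa [hone] using SetLike.one_mem_graded 𝒜)
    (fun {i j a b} _ ha _ hb => by
      rw [Submodule.mem_comap, hmul, add_comm i j]
      exact SetLike.mul_mem_graded hb ha)
    hgen i ha

theorem linearMap_ext_of_adjoin_eq_top {s : Set A} (hs : Algebra.adjoin R s = ⊤)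
    (c : ι → ι → R) {f g : A →ₗ[R] A}
    (hf : ∀ {i j : ι} {a b : A}, a ∈ 𝒜 i → b ∈ 𝒜 j → f (a * b) = c i j • (f b * f a))
    (hg : ∀ {i j : ι} {a b : A}, a ∈ 𝒜 i → b ∈ 𝒜 j → g (a * b) = c i j • (g b * g a))
    (hone : f 1 = g 1) (hgen : ∀ a ∈ s, ∃ i, a ∈ 𝒜 i ∧ f a = g a) : f = g := by
  have h𝒜 (i : ι) : 𝒜 i ≤ LinearMap.eqLocus f g :=
    grade_le_of_adjoin_eq_top 𝒜 hs (fun _ => LinearMap.eqLocus f g) hone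
      (fun ha hfa hb hgb => by
        simp only [LinearMap.mem_eqLocus] at hfa hgb ⊢
        rw [hf ha hb, hg ha hb, hfa, hgb])
      hgen i
  refine LinearMap.ext fun a => ?_
  have := (Decomposition.isInternal 𝒜).submodule_iSup_eq_top ▸ iSup_le h𝒜
  exact this Submodule.mem_top

section Twist

variable [Fintype ι]

noncomputable def gradeScale (c : ι → R) : A →ₗ[R] A :=
  ∑ i, c i • proj 𝒜 i

theorem gradeScale_of_mem (c : ι → R) {i : ι} {a : A} (ha : a ∈ 𝒜 i) :
    gradeScale 𝒜 c a = c i • a := by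
  rw [gradeScale, LinearMap.sum_apply, Finset.sum_eq_single i]
  · simp [decompose_of_mem_same 𝒜 ha]
  · intro j _ hji
    simp [decompose_of_mem_ne 𝒜 ha hji.symm]
  · simp

theorem gradeScale_comp_mul (c : ι → R) (e : ι → ι → R)
    (hc : ∀ i j, c (i + j) = e i j * c i * c j) {f : A →ₗ[R] A}
    (hmul : ∀ a b, f (a * b) = f b * f a) (hf : ∀ {i a}, a ∈ 𝒜 i → f a ∈ 𝒜 i)
    {i j : ι} {a b : A} (ha : a ∈ 𝒜 i) (hb : b ∈ 𝒜 j) :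
    (gradeScale 𝒜 c ∘ₗ f) (a * b) =
      e i j • ((gradeScale 𝒜 c ∘ₗ f) b * (gradeScale 𝒜 c ∘ₗ f) a) := by
  have hba : f b * f a ∈ 𝒜 (i + j) := add_comm j i ▸ SetLike.mul_mem_graded (hf hb) (hf ha)
  simp only [LinearMap.comp_apply, hmul, gradeScale_of_mem 𝒜 c hba,
    gradeScale_of_mem 𝒜 c (hf ha), gradeScale_of_mem 𝒜 c (hf hb), smul_mul_smul_comm,
    smul_smul, hc]
  congr 1
  ring

end Twist

end

theorem pow_choose_two_val_add {M : Type*} [Monoid M] {q : M} (hq : q ^ 3 = 1) (i j : ZMod 3) :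
    q ^ (i + j).val.choose 2 = q ^ (i.val * j.val) * q ^ i.val.choose 2 * q ^ j.val.choose 2 := by
  rw [← pow_add, ← pow_add, pow_eq_pow_mod _ hq, pow_eq_pow_mod (i.val * j.val + _ + _) hq]
  congr 1
  revert i j
  decide

end GradedAlgebra

namespace UEnv

variable (t : g₁ →ₗ[ℂ] g₁ →ₗ[ℂ] g₁ →ₗ[ℂ] g₀)

noncomputable def envιₗ : (g₀ × g₁) →ₗ[ℂ] UEnv t :=
  (RingQuot.mkAlgHom ℂ (envRel t)).toLinearMap ∘ₗ TensorAlgebra.ι ℂ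

theorem coe_envιₗ : ⇑(envιₗ t) = envι t := rfl

theorem envι_add (z w : g₀ × g₁) : envι t (z + w) = envι t z + envι t w := by
  simp only [← coe_envιₗ, map_add]

theorem envι_eq_add (x : g₀) (y : g₁) : envι t (x, y) = envι t (x, 0) + envι t (0, y) := by
  rw [← envι_add, Prod.mk_add_mk, add_zero, zero_add]

theorem adjoin_range_envι_eq_top : Algebra.adjoin ℂ (Set.range (envι t)) = ⊤ := by
  change Algebra.adjoin ℂ (Set.range (RingQuot.mkAlgHom ℂ (envRel t) ∘ TensorAlgebra.ι ℂ)) = ⊤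
  rw [Set.range_comp, ← AlgHom.map_adjoin, TensorAlgebra.adjoin_range_ι, Algebra.map_top,
    AlgHom.range_eq_top]
  exact RingQuot.mkAlgHom_surjective ℂ (envRel t)

theorem adjoin_homogeneous_eq_top :
    Algebra.adjoin ℂ (Set.range (fun x : g₀ => envι t (x, 0)) ∪
      Set.range (fun y : g₁ => envι t (0, y))) = ⊤ := by
  refine eq_top_mono (Algebra.adjoin_le ?_) (adjoin_range_envι_eq_top t)
  rintro _ ⟨⟨x, y⟩, rfl⟩
  rw [envι_eq_add]
  exact add_mem (Algebra.subset_adjoin (Or.inl ⟨x, rfl⟩))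
    (Algebra.subset_adjoin (Or.inr ⟨y, rfl⟩))

theorem envι_lie_zero (x₁ x₂ : g₀) :
    envι t (x₁, 0) * envι t (x₂, 0) = envι t (x₂, 0) * envι t (x₁, 0) + envι t (⁅x₁, x₂⁆, 0) := by
  have h := RingQuot.mkAlgHom_rel ℂ (show envRel t _ _ from Or.inl ⟨x₁, x₂, rfl, rfl⟩)
  simp only [map_mul, map_add] at h
  exact h

theorem envι_lie_one (x : g₀) (y : g₁) :
    envι t (x, 0) * envι t (0, y) = envι t (0, y) * envι t (x, 0) + envι t (0, ⁅x, y⁆) := by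
  have h := RingQuot.mkAlgHom_rel ℂ (show envRel t _ _ from Or.inr (Or.inl ⟨x, y, rfl, rfl⟩))
  simp only [map_mul, map_add] at h
  exact h

theorem sum_perm_envι (y : Fin 3 → g₁) :
    ∑ σ : Equiv.Perm (Fin 3), envι t (0, y (σ 0)) * envι t (0, y (σ 1)) * envι t (0, y (σ 2)) =
      envι t (t (y 0) (y 1) (y 2), 0) := by
  have h := RingQuot.mkAlgHom_rel ℂ (show envRel t _ _ from Or.inr (Or.inr ⟨y, rfl, rfl⟩))
  simp only [map_sum, map_mul] at h
  exact h

theorem sum_perm_envι_rev (y : Fin 3 → g₁) :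
    ∑ σ : Equiv.Perm (Fin 3), envι t (0, y (σ 2)) * envι t (0, y (σ 1)) * envι t (0, y (σ 0)) =
      envι t (t (y 0) (y 1) (y 2), 0) := by
  rw [← sum_perm_envι]
  refine Fintype.sum_equiv (Equiv.mulRight (Equiv.swap 0 2)) _ _ fun σ => ?_
  simp [Equiv.swap_apply_of_ne_of_ne]

open MulOpposite in
noncomputable def antipodeOp : UEnv t →ₐ[ℂ] (UEnv t)ᵐᵒᵖ :=
  RingQuot.liftAlgHom ℂ ⟨TensorAlgebra.lift ℂ ((opLinearEquiv ℂ).toLinearMap ∘ₗ (-envιₗ t)), by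
    rintro _ _ (⟨x₁, x₂, rfl, rfl⟩ | ⟨x, y, rfl, rfl⟩ | ⟨y, rfl, rfl⟩) <;> apply unop_injective
    · simp [coe_envιₗ, envι_lie_zero t x₁ x₂]
    · simp [coe_envιₗ, envι_lie_one t x y]
    · simpa [coe_envιₗ, mul_assoc] using sum_perm_envι_rev t y⟩

noncomputable def antipode : UEnv t →ₗ[ℂ] UEnv t :=
  (MulOpposite.opLinearEquiv ℂ).symm.toLinearMap ∘ₗ (antipodeOp t).toLinearMap

theorem antipode_apply (u : UEnv t) : antipode t u = (antipodeOp t u).unop := rfl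

theorem antipode_one : antipode t 1 = 1 := by
  rw [antipode_apply, map_one, MulOpposite.unop_one]

theorem antipode_mul (a b : UEnv t) : antipode t (a * b) = antipode t b * antipode t a := by
  rw [antipode_apply, map_mul, MulOpposite.unop_mul, antipode_apply, antipode_apply]

theorem antipode_envι (z : g₀ × g₁) : antipode t (envι t z) = -envι t z := by
  have h : antipodeOp t (envι t z) = MulOpposite.op (-envι t z) :=
    (RingQuot.liftAlgHom_mkAlgHom_apply ℂ _ _ _).trans (by simp [coe_envιₗ])
  rw [antipode_apply, h, MulOpposite.unop_op]

section Twisted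

open GradedAlgebra

variable (𝒜 : ZMod 3 → Submodule ℂ (UEnv t)) [GradedAlgebra 𝒜]

theorem antipode_mem_grade (h0 : ∀ x : g₀, envι t (x, 0) ∈ 𝒜 0)
    (h1 : ∀ y : g₁, envι t (0, y) ∈ 𝒜 1) {i : ZMod 3} {a : UEnv t} (ha : a ∈ 𝒜 i) :
    antipode t a ∈ 𝒜 i := by
  refine map_mem_of_antimultiplicative 𝒜 (adjoin_homogeneous_eq_top t) _
    (antipode_one t) (antipode_mul t) ?_ ha
  rintro _ (⟨x, rfl⟩ | ⟨y, rfl⟩)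
  exacts [⟨0, h0 x, antipode_envι t _ ▸ neg_mem (h0 x)⟩,
    ⟨1, h1 y, antipode_envι t _ ▸ neg_mem (h1 y)⟩]

noncomputable def twistedAntipode (q : ℂ) : UEnv t →ₗ[ℂ] UEnv t :=
  gradeScale 𝒜 (fun j => q ^ j.val.choose 2) ∘ₗ antipode t

theorem twistedAntipode_one (q : ℂ) : twistedAntipode t 𝒜 q 1 = 1 := by
  simp [twistedAntipode, antipode_one,
    gradeScale_of_mem 𝒜 _ (SetLike.one_mem_graded 𝒜)]

theorem twistedAntipode_envι (q : ℂ) (h0 : ∀ x : g₀, envι t (x, 0) ∈ 𝒜 0)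
    (h1 : ∀ y : g₁, envι t (0, y) ∈ 𝒜 1) (z : g₀ × g₁) :
    twistedAntipode t 𝒜 q (envι t z) = -envι t z := by
  obtain ⟨x, y⟩ := z
  rw [envι_eq_add, map_add]
  simp [twistedAntipode, antipode_envι, gradeScale_of_mem 𝒜 _ (h0 x),
    gradeScale_of_mem 𝒜 _ (h1 y), ZMod.val_one, add_comm]

theorem twistedAntipode_mul {q : ℂ} (hq : q ^ 3 = 1) (h0 : ∀ x : g₀, envι t (x, 0) ∈ 𝒜 0)
    (h1 : ∀ y : g₁, envι t (0, y) ∈ 𝒜 1) {j k : ZMod 3} {a b : UEnv t} (ha : a ∈ 𝒜 j)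
    (hb : b ∈ 𝒜 k) :
    twistedAntipode t 𝒜 q (a * b) =
      q ^ (j.val * k.val) • (twistedAntipode t 𝒜 q b * twistedAntipode t 𝒜 q a) :=
  gradeScale_comp_mul 𝒜 _ (fun i j => q ^ (i.val * j.val))
    (pow_choose_two_val_add hq) (antipode_mul t) (antipode_mem_grade t 𝒜 h0 h1)
    ha hb

end Twisted

end UEnv

open UEnv GradedAlgebra in
theorem antipode_exists_unique_general (t : g₁ →ₗ[ℂ] g₁ →ₗ[ℂ] g₁ →ₗ[ℂ] g₀)
    (q : ℂ) (hq3 : q ^ 3 = 1)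
    (𝒜 : ZMod 3 → Submodule ℂ (UEnv t)) [GradedAlgebra 𝒜]
    (h0 : ∀ x : g₀, envι t ((x, 0) : g₀ × g₁) ∈ 𝒜 0)
    (h1 : ∀ y : g₁, envι t ((0, y) : g₀ × g₁) ∈ 𝒜 1) :
    ∃! S : UEnv t →ₗ[ℂ] UEnv t,
      S 1 = 1 ∧
      (∀ z : g₀ × g₁, S (envι t z) = - envι t z) ∧
      (∀ (a b : UEnv t) (j k : ZMod 3), a ∈ 𝒜 j → b ∈ 𝒜 k →
        S (a * b) = q ^ (j.val * k.val) • (S b * S a)) := by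
  refine ⟨twistedAntipode t 𝒜 q, ⟨twistedAntipode_one t 𝒜 q, twistedAntipode_envι t 𝒜 q h0 h1,
    fun a b j k => twistedAntipode_mul t 𝒜 hq3 h0 h1⟩, ?_⟩
  rintro S ⟨hS_one, hS_ι, hS_mul⟩
  refine linearMap_ext_of_adjoin_eq_top 𝒜 (adjoin_homogeneous_eq_top t) _ (hS_mul _ _ _ _)
    (twistedAntipode_mul t 𝒜 hq3 h0 h1) (hS_one.trans (twistedAntipode_one t 𝒜 q).symm) ?_
  rintro _ (⟨x, rfl⟩ | ⟨y, rfl⟩)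
  exacts [⟨0, h0 x, (hS_ι _).trans (twistedAntipode_envι t 𝒜 q h0 h1 _).symm⟩,
    ⟨1, h1 y, (hS_ι _).trans (twistedAntipode_envι t 𝒜 q h0 h1 _).symm⟩]

/-- (Antipode.) There is a unique `ℂ`-linear map `S : U(g) → U(g)` with
`S(1) = 1`, `S(ι z) = -ι z` for `z ∈ g₀ ⊕ g₁`, and the twisted
anti-multiplicativity `S(ab) = q^{|a||b|} S(b) S(a)` for homogeneous `a, b`. -/
theorem antipode_exists_unique (t : g₁ →ₗ[ℂ] g₁ →ₗ[ℂ] g₁ →ₗ[ℂ] g₀)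
    (hsymm : ∀ y₁ y₂ y₃ : g₁, t y₁ y₂ y₃ = t y₂ y₁ y₃ ∧ t y₁ y₂ y₃ = t y₁ y₃ y₂)
    (hequiv : ∀ (x : g₀) (y₁ y₂ y₃ : g₁),
      ⁅x, t y₁ y₂ y₃⁆ = t ⁅x, y₁⁆ y₂ y₃ + t y₁ ⁅x, y₂⁆ y₃ + t y₁ y₂ ⁅x, y₃⁆)
    (hfund : ∀ y₁ y₂ y₃ y₄ : g₁,
      ⁅t y₂ y₃ y₄, y₁⁆ + ⁅t y₁ y₃ y₄, y₂⁆ + ⁅t y₁ y₂ y₄, y₃⁆ + ⁅t y₁ y₂ y₃, y₄⁆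
        = (0 : g₁))
    (q : ℂ) (hq3 : q ^ 3 = 1) (hq1 : q ≠ 1)
    (𝒜 : ZMod 3 → Submodule ℂ (UEnv t)) [GradedAlgebra 𝒜]
    (h0 : ∀ x : g₀, envι t ((x, 0) : g₀ × g₁) ∈ 𝒜 0)
    (h1 : ∀ y : g₁, envι t ((0, y) : g₀ × g₁) ∈ 𝒜 1) :
    ∃! S : UEnv t →ₗ[ℂ] UEnv t,
      S 1 = 1 ∧
      (∀ z : g₀ × g₁, S (envι t z) = - envι t z) ∧
      (∀ (a b : UEnv t) (j k : ZMod 3), a ∈ 𝒜 j → b ∈ 𝒜 k →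
        S (a * b) = q ^ (j.val * k.val) • (S b * S a)) :=
  antipode_exists_unique_general t q hq3 𝒜 h0 h1
end
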